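/- Let n, m be positive integers, let s be a positive real number, and let f : B^n → B^m be a holomorphic map with f(0) = 0 such that 1 − ⟨f(z), f(w)⟩ = (1 − ⟨z,w⟩)^s for all z, w ∈ B^n, where the complex power is the principal branch. Then s is a positive integer. -/

import Mathlib

/-!
Restricting `f` to a complex line through the origin gives a holomorphic `g` from the unit disc
to `ℂᵐ` with `⟨g ζ, g ω⟩ = 1 - (1 - ω̄ ζ)ˢ`. Differentiating `k` times in `ζ` and `l` times in `ω`
at `0` shows that the Taylor coefficients `g⁽ᵏ⁾(0)`, `k ≥ 1`, are pairwise orthogonal, with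
`‖g⁽ᵏ⁾(0)‖²` a nonzero multiple of `s (s - 1) ⋯ (s - k + 1)`. Unless `s ∈ ℕ` these are infinitely
many nonzero orthogonal vectors in `ℂᵐ`.
-/

/-- The standard Hermitian inner product `⟨z,w⟩ = ∑ zᵢ · conj(wᵢ)` on `ℂⁿ`. -/
noncomputable def herm {n : ℕ} (z w : EuclideanSpace ℂ (Fin n)) : ℂ :=
  ∑ i, z i * (starRingEnd ℂ) (w i)

open ComplexConjugate Filter Topology
open scoped InnerProductSpace Nat

theorem herm_eq_inner {n : ℕ} (z w : EuclideanSpace ℂ (Fin n)) : herm z w = ⟪w, z⟫_ℂ := by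
  simp [herm, PiLp.inner_apply]

theorem exists_eq_zero_of_pairwise_inner_eq_zero {𝕜 E ι : Type*} [RCLike 𝕜]
    [NormedAddCommGroup E] [InnerProductSpace 𝕜 E] [FiniteDimensional 𝕜 E] [Infinite ι]
    {v : ι → E} (hv : Pairwise fun i j => ⟪v i, v j⟫_𝕜 = 0) : ∃ i, v i = 0 := by
  by_contra! h
  exact Module.Finite.not_linearIndependent_of_infinite v
    (linearIndependent_of_ne_zero_of_inner_eq_zero h hv)

theorem ContinuousLinearMap.iteratedDeriv_comp_left {𝕜 F G : Type*} [NontriviallyNormedField 𝕜]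
    [NormedAddCommGroup F] [NormedSpace 𝕜 F] [NormedAddCommGroup G] [NormedSpace 𝕜 G]
    {f : 𝕜 → F} {x : 𝕜} {k : ℕ} (L : F →L[𝕜] G) (hf : ContDiffAt 𝕜 k f x) :
    iteratedDeriv k (L ∘ f) x = L (iteratedDeriv k f x) := by
  simp [iteratedDeriv_eq_iteratedFDeriv, L.iteratedFDeriv_comp_left hf le_rfl]

theorem iteratedDeriv_one_sub_mul_cpow (a c : ℂ) (k : ℕ) {ζ : ℂ}
    (hζ : 1 - c * ζ ∈ Complex.slitPlane) :
    iteratedDeriv k (fun ζ => (1 - c * ζ) ^ a) ζ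
      = (descPochhammer ℂ k).eval a * (-c) ^ k * (1 - c * ζ) ^ (a - k) := by
  induction k generalizing ζ with
  | zero => simp
  | succ k ih =>
    have hU : IsOpen {ζ : ℂ | 1 - c * ζ ∈ Complex.slitPlane} :=
      Complex.isOpen_slitPlane.preimage (by fun_prop)
    have hd : HasDerivAt (fun ζ => 1 - c * ζ) (-c) ζ := by
      simpa using ((hasDerivAt_id ζ).const_mul c).const_sub 1
    have hk : iteratedDeriv k (fun ζ => (1 - c * ζ) ^ a) =ᶠ[𝓝 ζ]
        fun ζ => (descPochhammer ℂ k).eval a * (-c) ^ k * (1 - c * ζ) ^ (a - k) :=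
      eventually_of_mem (hU.mem_nhds hζ) fun _ h => ih h
    rw [iteratedDeriv_succ, hk.deriv_eq,
      ((hd.cpow_const hζ).const_mul _).deriv, descPochhammer_succ_eval]
    push_cast
    ring_nf

theorem descPochhammer_eval_ne_zero {R : Type*} [CommRing R] [NoZeroDivisors R] [Nontrivial R]
    {a : R} (ha : ∀ d : ℕ, a ≠ d) (k : ℕ) : (descPochhammer R k).eval a ≠ 0 := by
  rw [descPochhammer_eval_eq_prod_range]
  exact Finset.prod_ne_zero_iff.mpr fun j _ => sub_ne_zero.mpr (ha j)

section

variable {E : Type*} [NormedAddCommGroup E] [InnerProductSpace ℂ E] [CompleteSpace E] {g : ℂ → E}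

theorem inner_iteratedDeriv_eq_of_eventually_inner_eq (hg : AnalyticAt ℂ g 0) {v : E} {a : ℂ}
    {k : ℕ} (h : ∀ᶠ ω in 𝓝 0, ⟪g ω, v⟫_ℂ = a * conj ω ^ k) (l : ℕ) :
    ⟪v, iteratedDeriv l g 0⟫_ℂ = if l = k then conj a * k ! else 0 := by
  -- conjugating makes the dependence on `ω` holomorphic
  have h' : (fun ω => ⟪v, g ω⟫_ℂ) =ᶠ[𝓝 0] fun ω => conj a * ω ^ k :=
    h.mono fun ω hω => by simp [← inner_conj_symm v, hω]
  calc ⟪v, iteratedDeriv l g 0⟫_ℂ = iteratedDeriv l (fun ω => ⟪v, g ω⟫_ℂ) 0 :=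
        ((innerSL ℂ v).iteratedDeriv_comp_left hg.contDiffAt).symm
    _ = iteratedDeriv l (fun ω => conj a * ω ^ k) 0 := h'.iteratedDeriv_eq l
    _ = if l = k then conj a * k ! else 0 := by
      rw [iteratedDeriv_const_mul_field, iteratedDeriv_fun_pow_zero]
      split_ifs <;> simp

theorem eventually_inner_iteratedDeriv_eq_of_inner_eq_one_sub_cpow (hg : AnalyticAt ℂ g 0)
    {a : ℂ} (h : ∀ᶠ ω in 𝓝 0, ∀ᶠ ζ in 𝓝 0, ⟪g ω, g ζ⟫_ℂ = 1 - (1 - conj ω * ζ) ^ a)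
    {k : ℕ} (hk : 0 < k) :
    ∀ᶠ ω in 𝓝 0, ⟪g ω, iteratedDeriv k g 0⟫_ℂ
      = -(descPochhammer ℂ k).eval a * (-1) ^ k * conj ω ^ k := by
  filter_upwards [h] with ω hω
  calc ⟪g ω, iteratedDeriv k g 0⟫_ℂ = iteratedDeriv k (fun ζ => ⟪g ω, g ζ⟫_ℂ) 0 :=
        ((innerSL ℂ (g ω)).iteratedDeriv_comp_left hg.contDiffAt).symm
    _ = iteratedDeriv k (fun ζ => 1 - (1 - conj ω * ζ) ^ a) 0 :=
        Filter.EventuallyEq.iteratedDeriv_eq k hω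
    _ = -(descPochhammer ℂ k).eval a * (-1) ^ k * conj ω ^ k := by
      rw [iteratedDeriv_const_sub hk, iteratedDeriv_neg,
        iteratedDeriv_one_sub_mul_cpow _ _ _ (by simp [Complex.one_mem_slitPlane])]
      simp only [mul_zero, sub_zero, Complex.one_cpow, mul_one, neg_mul, neg_inj]
      ring

theorem inner_iteratedDeriv_iteratedDeriv_of_inner_eq_one_sub_cpow (hg : AnalyticAt ℂ g 0)
    {a : ℂ} (h : ∀ᶠ ω in 𝓝 0, ∀ᶠ ζ in 𝓝 0, ⟪g ω, g ζ⟫_ℂ = 1 - (1 - conj ω * ζ) ^ a)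
    {k : ℕ} (hk : 0 < k) (l : ℕ) :
    ⟪iteratedDeriv k g 0, iteratedDeriv l g 0⟫_ℂ
      = if l = k then conj (-(descPochhammer ℂ k).eval a * (-1) ^ k) * k ! else 0 :=
  inner_iteratedDeriv_eq_of_eventually_inner_eq hg
    (eventually_inner_iteratedDeriv_eq_of_inner_eq_one_sub_cpow hg h hk) l

theorem exists_natCast_eq_of_inner_eq_one_sub_cpow [FiniteDimensional ℂ E]
    (hg : AnalyticAt ℂ g 0) {a : ℂ}
    (h : ∀ᶠ ω in 𝓝 0, ∀ᶠ ζ in 𝓝 0, ⟪g ω, g ζ⟫_ℂ = 1 - (1 - conj ω * ζ) ^ a) :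
    ∃ d : ℕ, a = d := by
  by_contra! ha
  obtain ⟨k, hk⟩ := exists_eq_zero_of_pairwise_inner_eq_zero
    (v := fun k : ℕ => iteratedDeriv (k + 1) g 0) fun k l hkl => by
      simpa [hkl.symm] using
        inner_iteratedDeriv_iteratedDeriv_of_inner_eq_one_sub_cpow hg h k.succ_pos (l + 1)
  have hk_norm :=
    inner_iteratedDeriv_iteratedDeriv_of_inner_eq_one_sub_cpow hg h k.succ_pos (k + 1)
  simp only [hk, inner_zero_left] at hk_norm
  simp [descPochhammer_eval_ne_zero ha, Nat.factorial_ne_zero] at hk_norm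

end

theorem exponent_is_positive_integer_of_polarized_functional_equation_general
    (n m : ℕ) (hn : 0 < n) (s : ℝ) (hs : 0 < s)
    (f : EuclideanSpace ℂ (Fin n) → EuclideanSpace ℂ (Fin m))
    (hf_holo : DifferentiableOn ℂ f (Metric.ball 0 1))
    (heq : ∀ z ∈ Metric.ball (0 : EuclideanSpace ℂ (Fin n)) 1,
           ∀ w ∈ Metric.ball (0 : EuclideanSpace ℂ (Fin n)) 1,
      1 - herm (f z) (f w) = (1 - herm z w) ^ (s : ℂ)) :
    ∃ d : ℕ, 0 < d ∧ s = (d : ℝ) := by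
  set e : EuclideanSpace ℂ (Fin n) := EuclideanSpace.single ⟨0, hn⟩ 1
  have he : ⟪e, e⟫_ℂ = 1 := by simp [e]
  have hline : ∀ ζ ∈ Metric.ball (0 : ℂ) 1, ζ • e ∈ Metric.ball 0 1 := by
    intro ζ hζ
    simpa [e, norm_smul] using hζ
  set g : ℂ → EuclideanSpace ℂ (Fin m) := fun ζ => f (ζ • e)
  have hg : AnalyticAt ℂ g 0 :=
    (hf_holo.comp (by fun_prop) hline).analyticOnNhd Metric.isOpen_ball 0 (by simp)
  have hkernel : ∀ᶠ ω in 𝓝 0, ∀ᶠ ζ in 𝓝 0, ⟪g ω, g ζ⟫_ℂ = 1 - (1 - conj ω * ζ) ^ (s : ℂ) := by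
    filter_upwards [Metric.ball_mem_nhds (0 : ℂ) one_pos] with ω hω
    filter_upwards [Metric.ball_mem_nhds (0 : ℂ) one_pos] with ζ hζ
    have h := heq _ (hline ζ hζ) _ (hline ω hω)
    simp only [herm_eq_inner, inner_smul_left, inner_smul_right, he, mul_one, mul_comm ζ] at h
    linear_combination -h
  obtain ⟨d, hd⟩ := exists_natCast_eq_of_inner_eq_one_sub_cpow hg hkernel
  have hsd : s = d := by exact_mod_cast hd
  exact ⟨d, Nat.cast_pos.mp (hsd ▸ hs), hsd⟩

theorem exponent_is_positive_integer_of_polarized_functional_equation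
    (n m : ℕ) (hn : 0 < n) (hm : 0 < m) (s : ℝ) (hs : 0 < s)
    (f : EuclideanSpace ℂ (Fin n) → EuclideanSpace ℂ (Fin m))
    (hf_maps : ∀ z ∈ Metric.ball (0 : EuclideanSpace ℂ (Fin n)) 1,
      f z ∈ Metric.ball (0 : EuclideanSpace ℂ (Fin m)) 1)
    (hf_holo : DifferentiableOn ℂ f (Metric.ball 0 1))
    (hf0 : f 0 = 0)
    (heq : ∀ z ∈ Metric.ball (0 : EuclideanSpace ℂ (Fin n)) 1,
           ∀ w ∈ Metric.ball (0 : EuclideanSpace ℂ (Fin n)) 1,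
      1 - herm (f z) (f w) = (1 - herm z w) ^ (s : ℂ)) :
    ∃ d : ℕ, 0 < d ∧ s = (d : ℝ) :=
  exponent_is_positive_integer_of_polarized_functional_equation_general n m hn s hs f hf_holo heq
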